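/- arXiv:2307.06016 — 3 statements merged into one kernel-verified Lean document; each statement's English description precedes it below -/
import Mathlib

section
/- For a totally-ordered complete lattice D, a quantitative property Φ : Σ^ω → D is safe if and only if it is threshold safe, i.e., if and only if for every v ∈ D the set {w ∈ Σ^ω | Φ(w) ≥ v} is a boolean safety property. -/
/-- Concatenation of a finite word `u` with an infinite word `w`. -/
def wordCat {A : Type*} (u : List A) (w : ℕ → A) : ℕ → A :=
  fun i => if h : i < u.length then u.get ⟨i, h⟩ else w (i - u.length)

/-- The finite prefix of length `n` of an infinite word `w`. -/
def wordPre {A : Type*} (w : ℕ → A) (n : ℕ) : List A :=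
  List.ofFn (fun i : Fin n => w i)

/-- Safety for properties into a totally-ordered complete lattice. -/
def QuantSafe {A D : Type*} [CompleteLinearOrder D] (Φ : (ℕ → A) → D) : Prop :=
  ∀ (w : ℕ → A) (v : D), Φ w < v →
    ∃ n : ℕ, (⨆ w' : ℕ → A, Φ (wordCat (wordPre w n) w')) < v

/-- A boolean safety property. -/
def BoolSafety {A : Type*} (P : Set (ℕ → A)) : Prop :=
  ∀ w : ℕ → A, w ∉ P → ∃ n : ℕ, ∀ w' : ℕ → A, wordCat (wordPre w n) w' ∉ P

/-- For a totally-ordered complete lattice, a quantitative property is safe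
iff it is threshold safe. -/
theorem safe_iff_threshold_safe {A D : Type*} [Finite A] [Nonempty A]
    [CompleteLinearOrder D] (Φ : (ℕ → A) → D) :
    QuantSafe Φ ↔ ∀ v : D, BoolSafety {w : ℕ → A | v ≤ Φ w} := by
  constructor
  · intro h v w hw
    rw [Set.mem_setOf_eq, not_le] at hw
    obtain ⟨n, hn⟩ := h w v hw
    refine ⟨n, fun w' hmem => ?_⟩
    rw [Set.mem_setOf_eq] at hmem
    exact absurd (hmem.trans (le_iSup (fun w' => Φ (wordCat (wordPre w n) w')) w'))
      (not_le.mpr hn)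
  · intro h w v hv
    by_cases hex : ∃ t, Φ w < t ∧ t < v
    · obtain ⟨t, h1, h2⟩ := hex
      obtain ⟨n, hn⟩ := h t w (by simp [Set.mem_setOf_eq, not_le, h1])
      refine ⟨n, lt_of_le_of_lt (iSup_le fun w' => ?_) h2⟩
      have := hn w'
      rw [Set.mem_setOf_eq, not_le] at this
      exact this.le
    · push_neg at hex
      obtain ⟨n, hn⟩ := h v w (by simp [Set.mem_setOf_eq, not_le, hv])
      refine ⟨n, lt_of_le_of_lt (iSup_le fun w' => ?_) hv⟩
      have h1 := hn w'
      rw [Set.mem_setOf_eq, not_le] at h1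
      by_contra hc
      exact absurd h1 (not_lt.mpr (hex _ (not_le.mp hc)))
end

section
/- For a totally-ordered complete lattice D with its left order topology (generated by the sets {v' | v' < v}), a quantitative property Φ : Σ^ω → D is safe if and only if Φ is continuous as a map from the Cantor space Σ^ω to D with the left order topology. -/
lemma wordCat_apply {A : Type*} (w : ℕ → A) (n : ℕ) (w' : ℕ → A) (i : ℕ) :
    wordCat (wordPre w n) w' i = if i < n then w i else w' (i - n) := by
  simp [wordCat, wordPre]

lemma range_wordCat {A : Type*} (w : ℕ → A) (n : ℕ) :
    Set.range (fun w' => wordCat (wordPre w n) w') = {x : ℕ → A | ∀ i < n, x i = w i} := by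
  ext x
  constructor
  · rintro ⟨w', rfl⟩ i hi
    simp [wordCat_apply, hi]
  · intro hx
    refine ⟨fun j => x (j + n), funext fun i => ?_⟩
    show wordCat (wordPre w n) (fun j => x (j + n)) i = x i; rw [wordCat_apply]
    split
    · exact (hx i ‹_›).symm
    · congr 1; omega

lemma cylinder_isOpen {A : Type*} [TopologicalSpace A] [DiscreteTopology A]
    (w : ℕ → A) (n : ℕ) : IsOpen {x : ℕ → A | ∀ i < n, x i = w i} := by
  have : {x : ℕ → A | ∀ i < n, x i = w i}
      = ⋂ i ∈ Finset.range n, (fun x : ℕ → A => x i) ⁻¹' {w i} := by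
    ext x; simp
  rw [this]
  exact isOpen_biInter_finset fun i _ => (continuous_apply i).isOpen_preimage _ (isOpen_discrete _)

lemma sup_lt_of_forall_lt {X D : Type*} [TopologicalSpace X] [CompactSpace X] [Nonempty X]
    [CompleteLinearOrder D] (g : X → D) (v : D)
    (hc : ∀ t : D, IsOpen (g ⁻¹' Set.Iio t)) (h : ∀ x, g x < v) :
    (⨆ x, g x) < v := by
  by_cases h1 : ∃ t, t < v ∧ ∀ x, g x ≤ t
  · obtain ⟨t, ht, hb⟩ := h1
    exact lt_of_le_of_lt (iSup_le hb) ht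
  · push_neg at h1
    have hcov : (Set.univ : Set X) ⊆ ⋃ t : {t : D // t < v}, g ⁻¹' Set.Iio t.val := by
      intro x _
      obtain ⟨x', hx'⟩ := h1 (g x) (h x)
      exact Set.mem_iUnion.mpr ⟨⟨g x', h x'⟩, hx'⟩
    obtain ⟨s, hs⟩ := isCompact_univ.elim_finite_subcover (fun t : {t : D // t < v} => g ⁻¹' Set.Iio t.val) (fun t => hc t.val) hcov
    have hsne : s.Nonempty := by
      obtain ⟨x⟩ := ‹Nonempty X›
      obtain ⟨t, ht, -⟩ := Set.mem_iUnion₂.mp (hs (Set.mem_univ x))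
      exact ⟨t, ht⟩
    refine lt_of_le_of_lt (iSup_le fun x => ?_) ((Finset.sup'_lt_iff hsne).mpr fun t _ => t.2)
    obtain ⟨t, ht, hxt⟩ := Set.mem_iUnion₂.mp (hs (Set.mem_univ x))
    exact le_trans (le_of_lt hxt) (Finset.le_sup' (fun t => t.val) ht)

lemma wordCat_continuous {A : Type*} [TopologicalSpace A] [DiscreteTopology A]
    (w : ℕ → A) (n : ℕ) : Continuous (fun w' : ℕ → A => wordCat (wordPre w n) w') := by
  have h : (fun w' : ℕ → A => wordCat (wordPre w n) w')
      = fun w' i => if i < n then w i else w' (i - n) := by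
    funext w' i; rw [wordCat_apply]
  rw [h]
  refine continuous_pi fun i => ?_
  split_ifs
  · exact continuous_const
  · exact continuous_apply (i - n)

/-- The left order topology on `D`, generated by the sets `{v' | v' < v}`. -/
def leftOrderTopology (D : Type*) [CompleteLinearOrder D] : TopologicalSpace D :=
  TopologicalSpace.generateFrom (Set.range (Set.Iio : D → Set D))

/-- A property into a totally-ordered complete lattice is safe iff it is
continuous from the Cantor space `Σ^ω` to `D` with the left order topology. -/
theorem safe_iff_leftOrderTopology_continuous {A D : Type*} [Finite A] [Nonempty A]
    [TopologicalSpace A] [DiscreteTopology A] [CompleteLinearOrder D]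
    (Φ : (ℕ → A) → D) :
    QuantSafe Φ ↔ @Continuous (ℕ → A) D Pi.topologicalSpace (leftOrderTopology D) Φ := by
  constructor
  · intro hs
    rw [leftOrderTopology, continuous_generateFrom_iff]
    rintro _ ⟨v, rfl⟩
    rw [isOpen_iff_forall_mem_open]
    intro w hw
    obtain ⟨n, hn⟩ := hs w v hw
    refine ⟨{x : ℕ → A | ∀ i < n, x i = w i}, ?_, cylinder_isOpen w n, fun i _ => rfl⟩
    intro x hx
    have : x ∈ Set.range (fun w' => wordCat (wordPre w n) w') := by
      rw [range_wordCat]; exact hx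
    obtain ⟨w', rfl⟩ := this
    exact lt_of_le_of_lt (le_iSup (fun w' => Φ (wordCat (wordPre w n) w')) w') hn
  · intro hc w v hv
    have hIio : ∀ t : D, IsOpen (Φ ⁻¹' Set.Iio t) := fun t =>
      @Continuous.isOpen_preimage _ _ _ (leftOrderTopology D) Φ hc _
        (TopologicalSpace.GenerateOpen.basic _ ⟨t, rfl⟩)
    obtain ⟨I, u, hu, hsub⟩ := isOpen_pi_iff.mp (hIio v) w hv
    set n := (I.sup id) + 1 with hn
    refine ⟨n, sup_lt_of_forall_lt _ v (fun t => ?_) (fun w' => ?_)⟩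
    · exact (wordCat_continuous w n).isOpen_preimage _ (hIio t)
    · refine hsub ?_
      intro i hi
      have h1 : i < n := Nat.lt_succ_of_le (Finset.le_sup (f := id) hi)
      rw [wordCat_apply, if_pos h1]
      exact (hu i hi).2
end

section
/- For a totally-ordered complete lattice D, a quantitative property Φ : Σ^ω → D is both safe and co-safe if and only if Φ is continuous with respect to the order topology on D. -/
/-- Co-safety for properties into a totally-ordered complete lattice. -/
def QuantCosafe {A D : Type*} [CompleteLinearOrder D] (Φ : (ℕ → A) → D) : Prop :=
  ∀ (w : ℕ → A) (v : D), v < Φ w →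
    ∃ n : ℕ, v < ⨅ w' : ℕ → A, Φ (wordCat (wordPre w n) w')

/-- The order topology on `D`, generated by the open rays. -/
def rayOrderTopology (D : Type*) [CompleteLinearOrder D] : TopologicalSpace D :=
  TopologicalSpace.generateFrom
    (Set.range (Set.Iio : D → Set D) ∪ Set.range (Set.Ioi : D → Set D))

/-- The cylinder set of words agreeing with `w` on the first `n` letters. -/
def cyl {A : Type*} (w : ℕ → A) (n : ℕ) : Set (ℕ → A) := {w' | ∀ i < n, w' i = w i}

lemma wordPre_length {A : Type*} (w : ℕ → A) (n : ℕ) : (wordPre w n).length = n := by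
  simp [wordPre]

lemma wordCat_pre_mem_cyl {A : Type*} (w : ℕ → A) (n : ℕ) (w' : ℕ → A) :
    wordCat (wordPre w n) w' ∈ cyl w n := by
  intro i hi
  simp [wordCat, wordPre, hi]

lemma cyl_mem_range {A : Type*} (w : ℕ → A) (n : ℕ) (w'' : ℕ → A) (h : w'' ∈ cyl w n) :
    wordCat (wordPre w n) (fun i => w'' (i + n)) = w'' := by
  funext i
  by_cases hi : i < n
  · simpa [wordCat, wordPre, hi] using (h i hi).symm
  · simp only [wordCat, wordPre, List.length_ofFn, hi, dite_false]
    congr 1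
    omega

lemma range_wordCat_pre {A : Type*} (w : ℕ → A) (n : ℕ) :
    Set.range (fun w' => wordCat (wordPre w n) w') = cyl w n := by
  apply Set.Subset.antisymm
  · rintro _ ⟨w', rfl⟩; exact wordCat_pre_mem_cyl w n w'
  · intro w'' h; exact ⟨fun i => w'' (i + n), cyl_mem_range w n w'' h⟩

lemma cyl_eq {A : Type*} (w : ℕ → A) (n : ℕ) :
    cyl w n = ⋂ i ∈ Finset.range n, (fun w' : ℕ → A => w' i) ⁻¹' {w i} := by
  ext w'; simp [cyl]

lemma isOpen_cyl {A : Type*} [TopologicalSpace A] [DiscreteTopology A] (w : ℕ → A) (n : ℕ) :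
    IsOpen (cyl w n) := by
  rw [cyl_eq]
  exact isOpen_biInter_finset fun i _ => (continuous_apply i).isOpen_preimage _ (isOpen_discrete _)

lemma isClosed_cyl {A : Type*} [TopologicalSpace A] [DiscreteTopology A] (w : ℕ → A) (n : ℕ) :
    IsClosed (cyl w n) := by
  rw [cyl_eq]
  exact isClosed_biInter fun i _ => (isClosed_discrete _).preimage (continuous_apply i)

/-- A property into a totally-ordered complete lattice is both safe and co-safe
iff it is continuous with respect to the order topology on `D`. -/
theorem safe_and_cosafe_iff_orderTopology_continuous {A D : Type*}
    [Finite A] [Nonempty A] [TopologicalSpace A] [DiscreteTopology A]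
    [CompleteLinearOrder D] (Φ : (ℕ → A) → D) :
    (QuantSafe Φ ∧ QuantCosafe Φ) ↔
      @Continuous (ℕ → A) D Pi.topologicalSpace (rayOrderTopology D) Φ := by
  letI : TopologicalSpace D := rayOrderTopology D
  haveI : OrderTopology D := by
    constructor
    show rayOrderTopology D = _
    unfold rayOrderTopology
    congr 1
    ext s
    constructor
    · rintro (⟨a, rfl⟩ | ⟨a, rfl⟩)
      · exact ⟨a, Or.inr rfl⟩
      · exact ⟨a, Or.inl rfl⟩
    · rintro ⟨a, rfl | rfl⟩
      · exact Or.inr ⟨a, rfl⟩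
      · exact Or.inl ⟨a, rfl⟩
  constructor
  · rintro ⟨hs, hc⟩
    rw [rayOrderTopology, continuous_generateFrom_iff]
    rintro s (⟨v, rfl⟩ | ⟨v, rfl⟩)
    · -- preimage of Iio v
      rw [isOpen_iff_forall_mem_open]
      intro w hw
      obtain ⟨n, hn⟩ := hs w v hw
      refine ⟨cyl w n, ?_, isOpen_cyl w n, fun i hi => rfl⟩
      intro w'' hw''
      have : Φ w'' ≤ ⨆ w' : ℕ → A, Φ (wordCat (wordPre w n) w') := by
        rw [← cyl_mem_range w n w'' hw'']
        exact le_iSup (fun w' => Φ (wordCat (wordPre w n) w')) _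
      exact lt_of_le_of_lt this hn
    · rw [isOpen_iff_forall_mem_open]
      intro w hw
      obtain ⟨n, hn⟩ := hc w v hw
      refine ⟨cyl w n, ?_, isOpen_cyl w n, fun i hi => rfl⟩
      intro w'' hw''
      have : (⨅ w' : ℕ → A, Φ (wordCat (wordPre w n) w')) ≤ Φ w'' := by
        rw [← cyl_mem_range w n w'' hw'']
        exact iInf_le (fun w' => Φ (wordCat (wordPre w n) w')) _
      exact lt_of_lt_of_le hn this
  · intro hΦ
    have key : ∀ (w : ℕ → A) (s : Set D), IsOpen s → Φ w ∈ s →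
        ∃ n : ℕ, Φ '' cyl w n ⊆ s ∧ sSup (Φ '' cyl w n) ∈ Φ '' cyl w n ∧
          sInf (Φ '' cyl w n) ∈ Φ '' cyl w n ∧
          (⨆ w' : ℕ → A, Φ (wordCat (wordPre w n) w')) = sSup (Φ '' cyl w n) ∧
          (⨅ w' : ℕ → A, Φ (wordCat (wordPre w n) w')) = sInf (Φ '' cyl w n) := by
      intro w s hs hws
      have hop : IsOpen (Φ ⁻¹' s) := hΦ.isOpen_preimage s hs
      rw [isOpen_pi_iff] at hop
      obtain ⟨I, u, hu, hsub⟩ := hop w hws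
      set n := (I.sup id) + 1 with hn
      have hcyl : cyl w n ⊆ Φ ⁻¹' s := by
        intro w' hw'
        apply hsub
        intro i hi
        have : i < n := Nat.lt_succ_of_le (Finset.le_sup (f := id) hi)
        rw [hw' i this]
        exact (hu i hi).2
      have hcomp : IsCompact (Φ '' cyl w n) :=
        ((isClosed_cyl w n).isCompact).image hΦ
      have hne : (Φ '' cyl w n).Nonempty := ⟨Φ w, w, fun i _ => rfl, rfl⟩
      have him : Φ '' cyl w n ⊆ s := fun d ⟨w', hw', hd⟩ => hd ▸ hcyl hw'
      have hr : Set.range (fun w' => Φ (wordCat (wordPre w n) w')) = Φ '' cyl w n := by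
        rw [← range_wordCat_pre w n, ← Set.range_comp]; rfl
      refine ⟨n, him, hcomp.sSup_mem hne, hcomp.sInf_mem hne, ?_, ?_⟩
      · rw [iSup, hr]
      · rw [iInf, hr]
    constructor
    · intro w v hv
      obtain ⟨n, him, hsup, _, heq, _⟩ := key w (Set.Iio v) isOpen_Iio hv
      exact ⟨n, heq ▸ him hsup⟩
    · intro w v hv
      obtain ⟨n, him, _, hinf, _, heq⟩ := key w (Set.Ioi v) isOpen_Ioi hv
      exact ⟨n, heq ▸ him hinf⟩
end
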